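/- Let f : ℝ → ℝ be continuous at 0, and suppose that for every t ∈ I the series F(t) := −∑_{k=0}^∞ q^{[k]_n}·t^{n^k}·(q^{n^k}·t^{n^k·(n−1)} − 1)·f(q^{[k]_n}·t^{n^k}) converges. Then F is an n,q-antiderivative of f on I: D_{n,q} F(t) = f(t) for all t ∈ I (in particular, F is differentiable at 0 with F′(0) = f(0)). -/

import Mathlib

/-!
With `β t = q·tⁿ` the series reads `F x = ∑ₖ (βᵏ x - βᵏ⁺¹ x)·f(βᵏ x)` (the β-integral of Hamza,
Sarhan, Shehata and Aldwoah). Shifting the index gives `F (β x) = F x + (β x - x)·f x`, which is the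
claim away from the fixed points of `β`; on `I` the only one is `0`, because `|β t| < |t|` for
`0 < |t| < θ`. Near `0`, `β` contracts by the factor `q`, so the increments `βᵏ x - βᵏ⁺¹ x` decay
geometrically and telescope to `x`; hence `F x - x·f 0 = ∑ₖ (βᵏ x - βᵏ⁺¹ x)·(f(βᵏ x) - f 0)` is
`o(x)` by continuity of `f` at `0`.
-/

open Filter
open scoped Classical

noncomputable section

/-- `[k]_n = ∑_{i=0}^{k-1} n^i` (so `[0]_n = 0`). -/
def nbr (n k : ℕ) : ℕ := ∑ i ∈ Finset.range k, n ^ i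

/-- `h(t) = q·t^n`. -/
def hfun (q : ℝ) (n : ℕ) (t : ℝ) : ℝ := q * t ^ n

/-- `θ = q^(1/(1-n))` (meaningful for `n ≥ 3`). -/
def theta (q : ℝ) (n : ℕ) : ℝ := q ^ ((1 : ℝ) / (1 - (n : ℝ)))

/-- `S = {0}` if `n = 1`, and `S = {-θ, 0, θ}` if `n ≥ 3`. -/
def Sset (q : ℝ) (n : ℕ) : Set ℝ :=
  if n = 1 then {0} else {-theta q n, 0, theta q n}

/-- `I = (-θ, θ)` (all of `ℝ` when `n = 1`). -/
def Iset (q : ℝ) (n : ℕ) : Set ℝ :=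
  if n = 1 then Set.univ else Set.Ioo (-theta q n) (theta q n)

/-- The `n,q`-power difference operator `D_{n,q}`. -/
def Dnq (q : ℝ) (n : ℕ) (f : ℝ → ℝ) (t : ℝ) : ℝ :=
  if t ∈ Sset q n then deriv f t
  else (f (q * t ^ n) - f t) / (q * t ^ n - t)

/-- The `k`-th summand of the series defining the `n,q`-integral `∫_0^x f(t) d_{n,q}t`. -/
def nqSeq (q : ℝ) (n : ℕ) (f : ℝ → ℝ) (x : ℝ) (k : ℕ) : ℝ :=
  q ^ nbr n k * x ^ n ^ k * (q ^ n ^ k * x ^ (n ^ k * (n - 1)) - 1) *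
    f (q ^ nbr n k * x ^ n ^ k)

/-- `∫_0^x f(t) d_{n,q}t`. -/
def nqInt0 (q : ℝ) (n : ℕ) (f : ℝ → ℝ) (x : ℝ) : ℝ := -∑' k : ℕ, nqSeq q n f x k

/-- `∫_a^b f(t) d_{n,q}t = ∫_0^b f(t) d_{n,q}t − ∫_0^a f(t) d_{n,q}t`. -/
def nqInt (q : ℝ) (n : ℕ) (f : ℝ → ℝ) (a b : ℝ) : ℝ :=
  nqInt0 q n f b - nqInt0 q n f a

/-- The orbit `[s]_{n,q} = {q^{[k]_n}·s^{n^k} : k ∈ ℕ}`. -/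
def nqOrbit (q : ℝ) (n : ℕ) (s : ℝ) : Set ℝ :=
  Set.range fun k : ℕ => q ^ nbr n k * s ^ n ^ k

/-- The `n,q`-interval `[a,b]_{n,q}`. -/
def nqInterval (q : ℝ) (n : ℕ) (a b : ℝ) : Set ℝ :=
  nqOrbit q n a ∪ nqOrbit q n b ∪ {0}

open Topology

def betaTerm (β f : ℝ → ℝ) (x : ℝ) (k : ℕ) : ℝ := (β^[k] x - β^[k + 1] x) * f (β^[k] x)

def betaIntegral (β f : ℝ → ℝ) (x : ℝ) : ℝ := ∑' k, betaTerm β f x k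

section BetaIntegral

variable {β f : ℝ → ℝ}

theorem betaIntegral_apply_map {x : ℝ} (hs : Summable (betaTerm β f x)) :
    betaIntegral β f (β x) = betaIntegral β f x + (β x - x) * f x := by
  have hshift : betaTerm β f (β x) = fun k => betaTerm β f x (k + 1) := by
    ext k
    simp only [betaTerm, ← Function.iterate_succ_apply]
  rw [betaIntegral, betaIntegral, hshift, hs.tsum_eq_zero_add]
  have h₀ : betaTerm β f x 0 = (x - β x) * f x := by simp [betaTerm]
  rw [h₀]
  ring

variable {c r : ℝ}

theorem abs_iterate_le (hc0 : 0 ≤ c) (hc1 : c ≤ 1) (hβ : ∀ y, |y| ≤ r → |β y| ≤ c * |y|)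
    {x : ℝ} (hx : |x| ≤ r) (k : ℕ) : |β^[k] x| ≤ c ^ k * |x| := by
  induction k with
  | zero => simp
  | succ k ih =>
    have hkr : |β^[k] x| ≤ r := ih.trans <| (mul_le_of_le_one_left (abs_nonneg x)
      (pow_le_one₀ hc0 hc1)).trans hx
    rw [Function.iterate_succ_apply', pow_succ']
    calc |β (β^[k] x)| ≤ c * |β^[k] x| := hβ _ hkr
      _ ≤ c * (c ^ k * |x|) := by gcongr
      _ = c * c ^ k * |x| := by ring

theorem abs_iterate_sub_iterate_succ_le (hc0 : 0 ≤ c) (hc1 : c ≤ 1)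
    (hβ : ∀ y, |y| ≤ r → |β y| ≤ c * |y|) {x : ℝ} (hx : |x| ≤ r) (k : ℕ) :
    |β^[k] x - β^[k + 1] x| ≤ 2 * |x| * c ^ k := by
  have h₁ := abs_iterate_le hc0 hc1 hβ hx k
  have h₂ := abs_iterate_le hc0 hc1 hβ hx (k + 1)
  have h₃ : c ^ (k + 1) ≤ c ^ k := pow_le_pow_of_le_one hc0 hc1 k.le_succ
  have h₄ := mul_le_mul_of_nonneg_right h₃ (abs_nonneg x)
  linarith [abs_sub (β^[k] x) (β^[k + 1] x)]

theorem hasSum_iterate_sub_iterate_succ (hc0 : 0 ≤ c) (hc1 : c < 1)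
    (hβ : ∀ y, |y| ≤ r → |β y| ≤ c * |y|) {x : ℝ} (hx : |x| ≤ r) :
    HasSum (fun k => β^[k] x - β^[k + 1] x) x := by
  have hs : Summable (fun k => β^[k] x - β^[k + 1] x) :=
    .of_norm_bounded ((summable_geometric_of_lt_one hc0 hc1).mul_left (2 * |x|))
      (abs_iterate_sub_iterate_succ_le hc0 hc1.le hβ hx)
  have hlim : Tendsto (fun k => β^[k] x) atTop (𝓝 0) :=
    squeeze_zero_norm (fun k => by simpa using abs_iterate_le hc0 hc1.le hβ hx k) <| by
      simpa using (tendsto_pow_atTop_nhds_zero_of_lt_one hc0 hc1).mul_const |x|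
  rw [hs.hasSum_iff_tendsto_nat]
  simp_rw [Finset.sum_range_sub' (fun k => β^[k] x), Function.iterate_zero_apply]
  simpa using tendsto_const_nhds.sub hlim

theorem abs_betaIntegral_sub_le (hc0 : 0 ≤ c) (hc1 : c < 1)
    (hβ : ∀ y, |y| ≤ r → |β y| ≤ c * |y|) {x : ℝ} (hx : |x| ≤ r)
    (hs : Summable (betaTerm β f x)) {ε : ℝ} (hf : ∀ k, |f (β^[k] x) - f 0| ≤ ε) :
    |betaIntegral β f x - x * f 0| ≤ 2 * |x| * ε * (1 - c)⁻¹ := by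
  have hsum : HasSum (fun k => (β^[k] x - β^[k + 1] x) * (f (β^[k] x) - f 0))
      (betaIntegral β f x - x * f 0) := by
    simpa only [betaIntegral, betaTerm, mul_sub] using
      hs.hasSum.sub ((hasSum_iterate_sub_iterate_succ hc0 hc1 hβ hx).mul_right (f 0))
  refine hsum.norm_le_of_bounded ((hasSum_geometric_of_lt_one hc0 hc1).mul_left _) fun k => ?_
  rw [Real.norm_eq_abs, abs_mul, mul_right_comm]
  exact mul_le_mul (abs_iterate_sub_iterate_succ_le hc0 hc1.le hβ hx k) (hf k)
    (abs_nonneg _) (by positivity)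

theorem hasDerivAt_betaIntegral_zero (hc0 : 0 ≤ c) (hc1 : c < 1) (hr : 0 < r)
    (hβ : ∀ y, |y| ≤ r → |β y| ≤ c * |y|) (hf : ContinuousAt f 0)
    (hs : ∀ᶠ x in 𝓝 0, Summable (betaTerm β f x)) :
    HasDerivAt (betaIntegral β f) (f 0) 0 := by
  have hF0 : betaIntegral β f 0 = 0 := by
    have h : ∀ k, β^[k] 0 = 0 := fun k => abs_nonpos_iff.1 <| by
      simpa using abs_iterate_le hc0 hc1.le hβ (x := 0) (by simpa using hr.le) k
    simp [betaIntegral, betaTerm, h]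
  rw [hasDerivAt_iff_isLittleO, Asymptotics.isLittleO_iff]
  intro C hC
  have hε : 0 < C * (1 - c) / 2 := by have := sub_pos.2 hc1; positivity
  obtain ⟨δ, hδ, hfδ⟩ := Metric.continuousAt_iff.1 hf _ hε
  filter_upwards [hs, Metric.ball_mem_nhds 0 (lt_min hδ hr)] with x hsx hx
  rw [mem_ball_zero_iff, Real.norm_eq_abs, lt_min_iff] at hx
  have hfx : ∀ k, |f (β^[k] x) - f 0| ≤ C * (1 - c) / 2 := fun k => by
    refine (hfδ ?_).le
    rw [Real.dist_0_eq_abs]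
    calc |β^[k] x| ≤ c ^ k * |x| := abs_iterate_le hc0 hc1.le hβ hx.2.le k
      _ ≤ |x| := mul_le_of_le_one_left (abs_nonneg x) (pow_le_one₀ hc0 hc1.le)
      _ < δ := hx.1
  calc ‖betaIntegral β f x - betaIntegral β f 0 - (x - 0) • f 0‖
      = |betaIntegral β f x - x * f 0| := by simp [hF0]
    _ ≤ 2 * |x| * (C * (1 - c) / 2) * (1 - c)⁻¹ :=
      abs_betaIntegral_sub_le hc0 hc1 hβ hx.2.le hsx hfx
    _ = C * ‖x - 0‖ := by
      rw [sub_zero, Real.norm_eq_abs]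
      field_simp [(sub_pos.2 hc1).ne']

end BetaIntegral

section PowerMap

theorem nbr_succ (n k : ℕ) : nbr n (k + 1) = nbr n k + n ^ k := Finset.sum_range_succ _ _

theorem hfun_iterate (q : ℝ) (n : ℕ) (x : ℝ) (k : ℕ) :
    (hfun q n)^[k] x = q ^ nbr n k * x ^ n ^ k := by
  induction k generalizing x with
  | zero => simp [nbr]
  | succ k ih =>
    rw [Function.iterate_succ_apply, ih, hfun, nbr_succ, pow_add, mul_pow, ← pow_mul,
      pow_succ' n k]
    ring

variable {q : ℝ} {n : ℕ}

theorem betaTerm_hfun (hn : 1 ≤ n) (f : ℝ → ℝ) (x : ℝ) :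
    betaTerm (hfun q n) f x = -nqSeq q n f x := by
  obtain ⟨m, rfl⟩ : ∃ m, n = m + 1 := ⟨n - 1, by omega⟩
  ext k
  simp only [betaTerm, hfun_iterate, nqSeq, nbr_succ, Nat.add_sub_cancel, Pi.neg_apply]
  ring

theorem nqInt0_eq_betaIntegral (hn : 1 ≤ n) (f : ℝ → ℝ) :
    nqInt0 q n f = betaIntegral (hfun q n) f := by
  ext x
  simp only [nqInt0, betaIntegral, betaTerm_hfun hn, Pi.neg_apply, tsum_neg]

theorem abs_hfun_le (hq : 0 ≤ q) (hn : 1 ≤ n) {y : ℝ} (hy : |y| ≤ 1) :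
    |hfun q n y| ≤ q * |y| := by
  rw [hfun, abs_mul, abs_pow, abs_of_nonneg hq]
  gcongr
  exact pow_le_of_le_one (abs_nonneg y) hy (by omega)

theorem theta_pow_sub_one (hq : 0 ≤ q) (hn : 2 ≤ n) : theta q n ^ (n - 1) = q⁻¹ := by
  have hn' : (1 : ℝ) - n ≠ 0 := by
    have : (2 : ℝ) ≤ n := by exact_mod_cast hn
    linarith
  rw [theta, ← Real.rpow_natCast, ← Real.rpow_mul hq, Nat.cast_sub (by omega), Nat.cast_one,
    show 1 / (1 - (n : ℝ)) * (n - 1) = -1 by field_simp; ring, Real.rpow_neg_one]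

theorem abs_hfun_lt (hq0 : 0 < q) (hq1 : q < 1) (hn : 1 ≤ n) {t : ℝ} (ht : t ∈ Iset q n)
    (ht0 : t ≠ 0) : |hfun q n t| < |t| := by
  have key : q * |t| ^ (n - 1) < 1 := by
    rcases eq_or_ne n 1 with rfl | hn1
    · simpa using hq1
    · simp only [Iset, hn1, if_false, Set.mem_Ioo] at ht
      calc q * |t| ^ (n - 1) < q * theta q n ^ (n - 1) := by
            gcongr
            · omega
            · exact abs_lt.2 ht
        _ = 1 := by rw [theta_pow_sub_one hq0.le (by omega), mul_inv_cancel₀ hq0.ne']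
  calc |hfun q n t| = q * |t| ^ (n - 1) * |t| := by
        rw [hfun, abs_mul, abs_of_pos hq0, abs_pow, mul_assoc, ← pow_succ, Nat.sub_add_cancel hn]
    _ < |t| := mul_lt_of_lt_one_left (abs_pos.2 ht0) key

theorem Iset_mem_nhds_zero (hq : 0 < q) : Iset q n ∈ 𝓝 0 := by
  have hθ : 0 < theta q n := Real.rpow_pos_of_pos hq _
  unfold Iset
  split
  · exact univ_mem
  · exact Ioo_mem_nhds (neg_neg_of_pos hθ) hθ

theorem zero_mem_Sset : (0 : ℝ) ∈ Sset q n := by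
  unfold Sset
  split <;> simp

theorem eq_zero_of_mem_Sset_of_mem_Iset {t : ℝ} (hS : t ∈ Sset q n) (hI : t ∈ Iset q n) :
    t = 0 := by
  unfold Sset Iset at *
  split_ifs at hS hI
  · exact hS
  · simp only [Set.mem_insert_iff, Set.mem_singleton_iff, Set.mem_Ioo] at hS hI
    rcases hS with rfl | rfl | rfl
    · exact absurd hI.1 (lt_irrefl _)
    · rfl
    · exact absurd hI.2 (lt_irrefl _)

end PowerMap

theorem stmt8 (q : ℝ) (hq0 : 0 < q) (hq1 : q < 1) (n : ℕ) (hn : Odd n)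
    (f : ℝ → ℝ) (hf : ContinuousAt f 0)
    (hsum : ∀ t ∈ Iset q n, Summable (nqSeq q n f t)) :
    (∀ t ∈ Iset q n, Dnq q n (nqInt0 q n f) t = f t) ∧
    HasDerivAt (nqInt0 q n f) (f 0) 0 := by
  have hn1 : 1 ≤ n := hn.pos
  rw [nqInt0_eq_betaIntegral hn1]
  have hsum' : ∀ t ∈ Iset q n, Summable (betaTerm (hfun q n) f t) := fun t ht => by
    rw [betaTerm_hfun hn1]
    exact (hsum t ht).neg
  have hderiv : HasDerivAt (betaIntegral (hfun q n) f) (f 0) 0 :=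
    hasDerivAt_betaIntegral_zero hq0.le hq1 one_pos (fun _ => abs_hfun_le hq0.le hn1) hf
      (eventually_of_mem (Iset_mem_nhds_zero hq0) hsum')
  refine ⟨fun t ht => ?_, hderiv⟩
  by_cases hS : t ∈ Sset q n
  · obtain rfl := eq_zero_of_mem_Sset_of_mem_Iset hS ht
    rw [Dnq, if_pos hS, hderiv.deriv]
  · have ht0 : t ≠ 0 := by
      rintro rfl
      exact hS zero_mem_Sset
    have hne : hfun q n t - t ≠ 0 :=
      sub_ne_zero.2 fun h => (abs_hfun_lt hq0 hq1 hn1 ht ht0).ne (by rw [h])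
    rw [Dnq, if_neg hS, ← hfun, betaIntegral_apply_map (hsum' t ht), add_sub_cancel_left,
      mul_div_cancel_left₀ _ hne]
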